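/- arXiv:1501.00391 — 2 statements merged into one kernel-verified Lean document; each statement's English description precedes it below -/
import Mathlib

section
/- Let G be a connected graph and let C, C' be two cliques of G, regarded as vertices of the clique graph Cl(G). Then the graph distance in Cl(G) satisfies d_{Cl(G)}(C,C') = min{ d_G(x,x') : x ∈ C, x' ∈ C' } + 1, provided C ≠ C'. -/
/-- A maximal clique (maximal complete subgraph) of `G`. -/
def IsMaxClique {V : Type*} (G : SimpleGraph V) (s : Set V) : Prop :=
  G.IsClique s ∧ ∀ t : Set V, G.IsClique t → s ⊆ t → s = t

/-- The clique graph: vertices are the maximal cliques of `G`, two cliques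
are adjacent iff they are distinct and have nonempty intersection. -/
def cliqueGraph {V : Type*} (G : SimpleGraph V) :
    SimpleGraph {s : Set V // IsMaxClique G s} where
  Adj C D := C ≠ D ∧ (C.1 ∩ D.1).Nonempty
  symm := by
    constructor
    rintro C D ⟨h1, h2⟩
    exact ⟨h1.symm, by rwa [Set.inter_comm]⟩
  loopless := ⟨fun C h => h.1 rfl⟩

/-!
A walk `x = x₀, x₁, …, xₙ = x'` in `G` with `x ∈ C`, `x' ∈ C'` yields the walk
`C, D₁, …, Dₙ, C'` in `Cl(G)`, where `Dᵢ` is a maximal clique containing the edge `xᵢ₋₁xᵢ`;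
so `d_{Cl(G)}(C, C') ≤ d_G(x, x') + 1`. Conversely, consecutive cliques on a walk
`C = D₀, D₁, …, Dₘ = C'` share vertices `yᵢ ∈ Dᵢ₋₁ ∩ Dᵢ`, and consecutive `yᵢ` lie in a common
clique, so `y₁ ∈ C` and `yₘ ∈ C'` are at distance at most `m - 1` in `G`.
-/

lemma IsMaxClique.nonempty {V : Type*} [Nonempty V] {G : SimpleGraph V} {s : Set V}
    (hs : IsMaxClique G s) : s.Nonempty := by
  obtain ⟨v⟩ := ‹Nonempty V›
  by_contra h
  rw [Set.not_nonempty_iff_eq_empty] at h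
  subst h
  exact (Set.singleton_ne_empty v).symm (hs.2 {v} (G.isClique_singleton v) (Set.empty_subset _))

namespace SimpleGraph

variable {V : Type*} (G : SimpleGraph V)

lemma isMaxClique_of_maximal {s : Set V} (h : Maximal G.IsClique s) : IsMaxClique G s :=
  ⟨h.prop, fun _ ht hst => (h.eq_of_ge ht hst).symm⟩

lemma exists_isMaxClique_superset {t : Set V} (ht : G.IsClique t) :
    ∃ s, IsMaxClique G s ∧ t ⊆ s := by
  obtain ⟨s, hts, hs⟩ := zorn_subset_nonempty {s | G.IsClique s}
    (fun c hc hchain _ => ⟨⋃₀ c, (isClique_sUnion hchain.directedOn).2 hc,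
      fun _ => Set.subset_sUnion_of_mem⟩) t ht
  exact ⟨s, G.isMaxClique_of_maximal hs, hts⟩

lemma exists_cliqueGraph_walk_length_le {x x' : V} (p : G.Walk x x') :
    ∀ {C C' : {s : Set V // IsMaxClique G s}}, x ∈ C.1 → x' ∈ C'.1 →
      ∃ w : (cliqueGraph G).Walk C C', w.length ≤ p.length + 1 := by
  induction p with
  | @nil u =>
    intro C C' hC hC'
    by_cases h : C = C'
    · exact ⟨h ▸ .nil, by subst h; simp⟩
    · exact ⟨.cons ⟨h, u, hC, hC'⟩ .nil, le_rfl⟩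
  | @cons a b _ hab q ih =>
    intro C C' hC hC'
    obtain ⟨D, hD, hab_sub⟩ := G.exists_isMaxClique_superset (isClique_pair.2 fun _ => hab)
    obtain ⟨w, hw⟩ := ih (C := ⟨D, hD⟩) (hab_sub (Set.mem_insert_of_mem _ rfl)) hC'
    by_cases h : C = ⟨D, hD⟩
    · subst h
      exact ⟨w, by simp only [Walk.length_cons]; omega⟩
    · exact ⟨.cons ⟨h, a, hC, hab_sub (Set.mem_insert _ _)⟩ w, Nat.succ_le_succ hw⟩

lemma exists_walk_length_le_of_cliqueGraph_walk {D C' : {s : Set V // IsMaxClique G s}}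
    (w : (cliqueGraph G).Walk D C') {x : V} (hx : x ∈ D.1) :
    ∃ x' ∈ C'.1, ∃ p : G.Walk x x', p.length ≤ w.length := by
  induction w generalizing x with
  | nil => exact ⟨x, hx, .nil, le_rfl⟩
  | @cons D E _ hDE w ih =>
    obtain ⟨y, hyD, hyE⟩ := hDE.2
    obtain ⟨x', hx', p, hp⟩ := ih hyE
    by_cases hxy : x = y
    · subst hxy
      exact ⟨x', hx', p, by simp only [Walk.length_cons]; omega⟩
    · exact ⟨x', hx', .cons (D.2.1 hx hyD hxy) p, by simpa using hp⟩

lemma exists_dist_add_one_le_of_cliqueGraph_walk {C C' : {s : Set V // IsMaxClique G s}}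
    (hne : C ≠ C') (w : (cliqueGraph G).Walk C C') :
    ∃ x ∈ C.1, ∃ x' ∈ C'.1, G.dist x x' + 1 ≤ w.length := by
  cases w with
  | nil => exact absurd rfl hne
  | cons hCE w =>
    obtain ⟨y, hyC, hyE⟩ := hCE.2
    obtain ⟨y', hy', p, hp⟩ := G.exists_walk_length_le_of_cliqueGraph_walk w hyE
    exact ⟨y, hyC, y', hy', by simpa using (G.dist_le p).trans hp⟩

end SimpleGraph

/-- For a connected graph `G` and distinct cliques `C ≠ C'`, the distance in
the clique graph satisfies
`d_{Cl(G)}(C,C') = min { d_G(x,x') : x ∈ C, x' ∈ C' } + 1`. -/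
theorem stmt_2 {V : Type*} (G : SimpleGraph V) (hG : G.Connected)
    (C C' : {s : Set V // IsMaxClique G s}) (hne : C ≠ C') :
    (cliqueGraph G).dist C C' =
      sInf {n : ℕ | ∃ x ∈ C.1, ∃ x' ∈ C'.1, G.dist x x' = n} + 1 := by
  set S := {n : ℕ | ∃ x ∈ C.1, ∃ x' ∈ C'.1, G.dist x x' = n}
  have := hG.nonempty
  obtain ⟨a, ha⟩ := C.2.nonempty
  obtain ⟨b, hb⟩ := C'.2.nonempty
  obtain ⟨x, hx, x', hx', hxx'⟩ := Nat.sInf_mem (s := S) ⟨_, a, ha, b, hb, rfl⟩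
  obtain ⟨p, hp⟩ := (hG x x').exists_walk_length_eq_dist
  obtain ⟨w, hw⟩ := G.exists_cliqueGraph_walk_length_le p hx hx'
  obtain ⟨w₀, hw₀⟩ := w.reachable.exists_walk_length_eq_dist
  obtain ⟨y, hy, y', hy', hyy'⟩ := G.exists_dist_add_one_le_of_cliqueGraph_walk hne w₀
  have hmin : sInf S ≤ G.dist y y' := Nat.sInf_le ⟨y, hy, y', hy', rfl⟩
  apply le_antisymm
  · calc (cliqueGraph G).dist C C' ≤ w.length := SimpleGraph.dist_le w
      _ ≤ p.length + 1 := hw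
      _ = sInf S + 1 := by rw [hp, hxx']
  · omega
end

section
/- If two connected graphs G₁ and G₂ with globally bounded vertex degrees are quasi-isometric (as metric spaces with their graph metrics), then they have the same upper and lower internal scaling dimensions: D̄₁ = D̄₂ and D̲₁ = D̲₂. -/
open Filter Topology

/-! ### Auxiliary graph lemmas -/

lemma dist_getVert_le {V : Type*} {G : SimpleGraph V} (hc : G.Connected) {x z : V}
    (p : G.Walk x z) (n : ℕ) : G.dist x (p.getVert n) ≤ n := by
  induction p generalizing n with
  | nil =>
    rw [SimpleGraph.Walk.getVert_of_length_le _ (by simp)]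
    simp [SimpleGraph.dist_self]
  | @cons a b c h q ih =>
    cases n with
    | zero => simp
    | succ n =>
      rw [SimpleGraph.Walk.getVert_cons_succ]
      calc G.dist a (q.getVert n) ≤ G.dist a b + G.dist b (q.getVert n) := hc.dist_triangle
        _ ≤ 1 + n := by
            have h1 : G.dist a b ≤ 1 := by simpa using SimpleGraph.dist_le h.toWalk
            exact Nat.add_le_add h1 (ih n)
        _ = n + 1 := by omega

lemma exists_adj_of_dist_le {V : Type*} {G : SimpleGraph V} (hc : G.Connected) {x z : V}
    {n : ℕ} (h : G.dist x z ≤ n + 1) :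
    ∃ w, G.dist x w ≤ n ∧ (w = z ∨ G.Adj w z) := by
  by_cases h' : G.dist x z ≤ n
  · exact ⟨z, h', Or.inl rfl⟩
  · have hd : G.dist x z = n + 1 := by omega
    obtain ⟨p, hp⟩ := hc.exists_walk_length_eq_dist x z
    refine ⟨p.getVert n, dist_getVert_le hc p n, Or.inr ?_⟩
    have hadj := p.adj_getVert_succ (i := n) (by omega : n < p.length)
    have : p.getVert (n + 1) = z := by
      rw [show n + 1 = p.length by omega]; exact p.getVert_length
    rwa [this] at hadj

lemma ncard_le_mul_of_maps_to {α β : Type*} {S : Set α} {T : Set β} (hS : S.Finite) (hT : T.Finite)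
    {f : α → β} {k : ℕ} (hmap : ∀ z ∈ S, f z ∈ T)
    (hfib : ∀ y ∈ T, {z | z ∈ S ∧ f z = y}.ncard ≤ k) : S.ncard ≤ k * T.ncard := by
  classical
  rw [Set.ncard_eq_toFinset_card _ hS, Set.ncard_eq_toFinset_card _ hT]
  apply Finset.card_le_mul_card_image_of_maps_to (f := f)
  · intro a ha
    rw [Set.Finite.mem_toFinset] at *
    exact hmap a ha
  · intro y hy
    rw [Set.Finite.mem_toFinset] at hy
    have hset : {z | z ∈ S ∧ f z = y} = ↑(hS.toFinset.filter (fun z => f z = y)) := by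
      ext z; simp [Set.Finite.mem_toFinset]
    have := hfib y hy
    rwa [hset, Set.ncard_coe_finset] at this

lemma ball_finite_and_card {V : Type*} {G : SimpleGraph V} (hc : G.Connected)
    [∀ w : V, Fintype (G.neighborSet w)] {v : ℕ} (hdeg : ∀ z : V, G.degree z ≤ v) :
    ∀ (n : ℕ) (x : V), {z | G.dist x z ≤ n}.Finite ∧ {z | G.dist x z ≤ n}.ncard ≤ (v + 1) ^ n := by
  intro n
  induction n with
  | zero =>
    intro x
    have hset : {z : V | G.dist x z ≤ 0} = {x} := by
      ext z
      simp only [Set.mem_setOf_eq, Nat.le_zero, Set.mem_singleton_iff]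
      rw [hc.dist_eq_zero_iff]
      exact eq_comm
    rw [hset]
    simp
  | succ n ih =>
    intro x
    classical
    set f : V → V := fun z =>
      if h : G.dist x z ≤ n + 1 then (exists_adj_of_dist_le hc h).choose else z with hf
    have hfspec : ∀ z, G.dist x z ≤ n + 1 →
        G.dist x (f z) ≤ n ∧ (f z = z ∨ G.Adj (f z) z) := by
      intro z hz
      simp only [hf, dif_pos hz]
      exact (exists_adj_of_dist_le hc hz).choose_spec
    have hfin : {z : V | G.dist x z ≤ n + 1}.Finite := by
      apply Set.Finite.subset
        (Set.Finite.biUnion (ih x).1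
          (fun w _ => ((G.neighborSet w).toFinite.insert w)))
      intro z hz
      obtain ⟨h1, h2⟩ := hfspec z hz
      refine Set.mem_biUnion h1 ?_
      rcases h2 with h2 | h2
      · rw [h2]; exact Set.mem_insert _ _
      · exact Set.mem_insert_of_mem _ h2
    refine ⟨hfin, ?_⟩
    have hcard : {z : V | G.dist x z ≤ n + 1}.ncard ≤ (v + 1) * {z : V | G.dist x z ≤ n}.ncard := by
      apply ncard_le_mul_of_maps_to hfin (ih x).1
      · intro z hz; exact (hfspec z hz).1
      · intro y _
        have hsub : {z | z ∈ {z : V | G.dist x z ≤ n + 1} ∧ f z = y} ⊆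
            insert y (G.neighborSet y) := by
          intro z ⟨hz1, hz2⟩
          rcases (hfspec z hz1).2 with h2 | h2
          · left; rw [← hz2, h2]
          · right; rw [← hz2]; exact h2
        calc {z | z ∈ {z : V | G.dist x z ≤ n + 1} ∧ f z = y}.ncard
            ≤ (insert y (G.neighborSet y)).ncard :=
              Set.ncard_le_ncard hsub ((G.neighborSet y).toFinite.insert y)
          _ ≤ (G.neighborSet y).ncard + 1 := Set.ncard_insert_le _ _
          _ ≤ v + 1 := by
              have : (G.neighborSet y).ncard = G.degree y := by
                rw [Set.ncard_eq_toFinset_card']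
                rfl
              rw [this]
              exact Nat.add_le_add_right (hdeg y) 1
    calc {z : V | G.dist x z ≤ n + 1}.ncard
        ≤ (v + 1) * {z : V | G.dist x z ≤ n}.ncard := hcard
      _ ≤ (v + 1) * (v + 1) ^ n := Nat.mul_le_mul_left _ (ih x).2
      _ = (v + 1) ^ (n + 1) := by ring

/-! ### Auxiliary analytic lemmas -/

lemma limsup_eq_of_transfer (u v : ℕ → ℝ) (hu0 : ∀ᶠ n in atTop, 0 ≤ u n)
    (hv0 : ∀ᶠ n in atTop, 0 ≤ v n)
    (huv : ∀ a : ℝ, (∀ᶠ n in atTop, u n ≤ a) → ∀ ε : ℝ, 0 < ε → (∀ᶠ n in atTop, v n ≤ a + ε))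
    (hvu : ∀ a : ℝ, (∀ᶠ n in atTop, v n ≤ a) → ∀ ε : ℝ, 0 < ε → (∀ᶠ n in atTop, u n ≤ a + ε)) :
    limsup u atTop = limsup v atTop := by
  rw [limsup_eq, limsup_eq]
  set Su := {a : ℝ | ∀ᶠ n in atTop, u n ≤ a} with hSu
  set Sv := {a : ℝ | ∀ᶠ n in atTop, v n ≤ a} with hSv
  have hSu0 : ∀ a ∈ Su, (0:ℝ) ≤ a := by
    intro a ha
    obtain ⟨n, h1, h2⟩ := (hu0.and ha).exists
    linarith
  have hSv0 : ∀ a ∈ Sv, (0:ℝ) ≤ a := by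
    intro a ha
    obtain ⟨n, h1, h2⟩ := (hv0.and ha).exists
    linarith
  have hbddu : BddBelow Su := ⟨0, hSu0⟩
  have hbddv : BddBelow Sv := ⟨0, hSv0⟩
  rcases Set.eq_empty_or_nonempty Su with h1 | h1
  · rcases Set.eq_empty_or_nonempty Sv with h2 | h2
    · rw [h1, h2]
    · exfalso
      obtain ⟨a, ha⟩ := h2
      have : a + 1 ∈ Su := hvu a ha 1 one_pos
      rw [h1] at this
      exact this
  · have h2 : Sv.Nonempty := by
      obtain ⟨a, ha⟩ := h1
      exact ⟨a + 1, huv a ha 1 one_pos⟩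
    apply le_antisymm
    · apply le_csInf h2
      intro b hb
      apply le_of_forall_pos_le_add
      intro ε hε
      exact csInf_le hbddu (hvu b hb ε hε)
    · apply le_csInf h1
      intro b hb
      apply le_of_forall_pos_le_add
      intro ε hε
      exact csInf_le hbddv (huv b hb ε hε)

lemma liminf_eq_of_transfer (u v : ℕ → ℝ) (hu0 : ∀ᶠ n in atTop, 0 ≤ u n)
    (hv0 : ∀ᶠ n in atTop, 0 ≤ v n)
    (huv : ∀ a : ℝ, (∀ᶠ n in atTop, a ≤ u n) → ∀ ε : ℝ, 0 < ε → (∀ᶠ n in atTop, a - ε ≤ v n))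
    (hvu : ∀ a : ℝ, (∀ᶠ n in atTop, a ≤ v n) → ∀ ε : ℝ, 0 < ε → (∀ᶠ n in atTop, a - ε ≤ u n)) :
    liminf u atTop = liminf v atTop := by
  rw [liminf_eq, liminf_eq]
  set Su := {a : ℝ | ∀ᶠ n in atTop, a ≤ u n} with hSu
  set Sv := {a : ℝ | ∀ᶠ n in atTop, a ≤ v n} with hSv
  have h0u : (0:ℝ) ∈ Su := hu0
  have h0v : (0:ℝ) ∈ Sv := hv0
  by_cases hb : BddAbove Su
  · have hbv : BddAbove Sv := by
      obtain ⟨M, hM⟩ := hb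
      refine ⟨M + 1, ?_⟩
      intro a ha
      have : a - 1 ∈ Su := hvu a ha 1 one_pos
      have := hM this
      linarith
    apply le_antisymm
    · apply csSup_le ⟨0, h0u⟩
      intro a ha
      apply le_of_forall_pos_le_add
      intro ε hε
      have := le_csSup hbv (huv a ha ε hε)
      linarith
    · apply csSup_le ⟨0, h0v⟩
      intro a ha
      apply le_of_forall_pos_le_add
      intro ε hε
      have := le_csSup hb (hvu a ha ε hε)
      linarith
  · have hbv : ¬ BddAbove Sv := by
      intro ⟨M, hM⟩
      apply hb
      refine ⟨M + 1, ?_⟩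
      intro a ha
      have := hM (huv a ha 1 one_pos)
      linarith
    rw [Real.sSup_of_not_bddAbove hb, Real.sSup_of_not_bddAbove hbv]

lemma tendsto_const_div_log (c : ℝ) :
    Tendsto (fun r : ℕ => c / Real.log r) atTop (𝓝 0) :=
  Tendsto.div_atTop tendsto_const_nhds
    (Real.tendsto_log_atTop.comp tendsto_natCast_atTop_atTop)

lemma transfer_upper (g₁ g₂ : ℕ → ℕ) (hg₁ : ∀ r, 1 ≤ g₁ r) (hg₂ : ∀ r, 1 ≤ g₂ r)
    (K C : ℕ) (hK : 0 < K) (hC : 0 < C) (hle : ∀ r, g₂ r ≤ C * g₁ (K * (r + 1)))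
    (a ε : ℝ) (hε : 0 < ε) (h : ∀ᶠ r in atTop, Real.log (g₁ r) / Real.log r ≤ a) :
    ∀ᶠ r in atTop, Real.log (g₂ r) / Real.log r ≤ a + ε := by
  have ha0 : 0 ≤ a := by
    obtain ⟨n, h1, h2⟩ := (h.and (eventually_ge_atTop 2)).exists
    have hlog : 0 < Real.log n := Real.log_pos (by exact_mod_cast h2)
    have hnum : 0 ≤ Real.log (g₁ n) := Real.log_nonneg (by exact_mod_cast hg₁ n)
    have : 0 ≤ Real.log (g₁ n) / Real.log n := div_nonneg hnum hlog.le
    linarith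
  obtain ⟨N₀, hN₀⟩ := eventually_atTop.mp h
  set N := max N₀ 2 with hN
  have hNdef : ∀ s ≥ N, Real.log (g₁ s) / Real.log s ≤ a :=
    fun s hs => hN₀ s (le_trans (le_max_left _ _) hs)
  have htend := tendsto_const_div_log (Real.log C + a * Real.log (2 * K))
  have hev := htend.eventually_lt_const hε
  filter_upwards [eventually_ge_atTop N, hev] with r hrN hrε
  have hr2 : (2:ℕ) ≤ r := le_trans (le_max_right _ _) hrN
  have hlogr : 0 < Real.log r := Real.log_pos (by exact_mod_cast hr2)
  set s := K * (r + 1) with hs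
  have hsr : r ≤ s := by
    calc r ≤ r + 1 := by omega
    _ ≤ K * (r + 1) := Nat.le_mul_of_pos_left _ hK
  have hsN : N ≤ s := le_trans hrN hsr
  have hs2 : (2:ℕ) ≤ s := le_trans hr2 hsr
  have hlogs : 0 < Real.log s := Real.log_pos (by exact_mod_cast hs2)
  have hstep1 : Real.log (g₂ r) ≤ Real.log C + Real.log (g₁ s) := by
    have h1 : (0:ℝ) < g₂ r := by
      have : (1:ℝ) ≤ g₂ r := by exact_mod_cast hg₂ r
      linarith
    have h2 : (g₂ r : ℝ) ≤ (C : ℝ) * (g₁ s : ℝ) := by exact_mod_cast hle r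
    calc Real.log (g₂ r) ≤ Real.log ((C : ℝ) * (g₁ s : ℝ)) := Real.log_le_log h1 h2
      _ = Real.log C + Real.log (g₁ s) := Real.log_mul (by positivity) (by
            have := hg₁ s; positivity)
  have hstep2 : Real.log (g₁ s) ≤ a * Real.log s := by
    have := hNdef s hsN
    rwa [div_le_iff₀ hlogs] at this
  have hstep3 : Real.log (s : ℕ) ≤ Real.log (2 * K) + Real.log r := by
    have hle' : (s : ℝ) ≤ (2 * K : ℝ) * r := by
      have : s ≤ 2 * K * r := by
        calc s = K * r + K := by rw [hs]; ring
        _ ≤ K * r + K * r := by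
            have : K ≤ K * r := Nat.le_mul_of_pos_right _ (by omega)
            omega
        _ = 2 * K * r := by ring
      calc (s:ℝ) ≤ ((2 * K * r : ℕ) : ℝ) := by exact_mod_cast this
      _ = (2 * K : ℝ) * r := by push_cast; ring
    calc Real.log s ≤ Real.log ((2 * K : ℝ) * r) := Real.log_le_log (by positivity) hle'
      _ = Real.log (2 * K) + Real.log r := Real.log_mul (by positivity) (by positivity)
  have key : Real.log (g₂ r) ≤ Real.log C + a * Real.log (2 * K) + a * Real.log r := by
    have := mul_le_mul_of_nonneg_left hstep3 ha0
    push_cast at this ⊢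
    nlinarith
  rw [div_le_iff₀ hlogr]
  have hεr : (Real.log C + a * Real.log (2 * K)) < ε * Real.log r := by
    rw [← div_lt_iff₀ hlogr] at *
    · exact hrε
  nlinarith

lemma transfer_lower (g₁ g₂ : ℕ → ℕ) (hg₁ : ∀ r, 1 ≤ g₁ r) (hg₂ : ∀ r, 1 ≤ g₂ r)
    (hmono₂ : Monotone g₂)
    (K C : ℕ) (hK : 0 < K) (hC : 0 < C) (hle : ∀ r, g₁ r ≤ C * g₂ (K * (r + 1)))
    (a ε : ℝ) (hε : 0 < ε) (h : ∀ᶠ r in atTop, a ≤ Real.log (g₁ r) / Real.log r) :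
    ∀ᶠ r in atTop, a - ε ≤ Real.log (g₂ r) / Real.log r := by
  by_cases ha : a - ε ≤ 0
  · filter_upwards [eventually_ge_atTop 2] with r hr
    have hlogr : 0 < Real.log r := Real.log_pos (by exact_mod_cast hr)
    have hnum : 0 ≤ Real.log (g₂ r) := Real.log_nonneg (by exact_mod_cast hg₂ r)
    have : 0 ≤ Real.log (g₂ r) / Real.log r := div_nonneg hnum hlogr.le
    linarith
  push_neg at ha
  have ha0 : 0 < a := by linarith
  obtain ⟨N₀, hN₀⟩ := eventually_atTop.mp h
  set N := max N₀ 2 with hN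
  have hNdef : ∀ r ≥ N, a ≤ Real.log (g₁ r) / Real.log r :=
    fun r hr => hN₀ r (le_trans (le_max_left _ _) hr)
  have htend := tendsto_const_div_log (a * Real.log (4 * K) + Real.log C)
  have hev := htend.eventually_lt_const hε
  filter_upwards [eventually_ge_atTop (2 * K * (N + 1)), eventually_ge_atTop 2, hev]
    with s hsB hs2 hsε
  set r := s / (2 * K) with hr
  have h2K : 0 < 2 * K := by omega
  have hrN : N ≤ r := by
    rw [hr, Nat.le_div_iff_mul_le h2K]
    calc N * (2 * K) = 2 * K * N := by ring
      _ ≤ 2 * K * (N + 1) := Nat.mul_le_mul_left _ (by omega)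
      _ ≤ s := hsB
  have hr2 : (2:ℕ) ≤ r := le_trans (le_max_right _ _) hrN
  have hmod := Nat.div_add_mod s (2 * K)
  rw [← hr] at hmod
  have hmodlt : s % (2 * K) < 2 * K := Nat.mod_lt _ h2K
  have hs2K : 2 * K ≤ s := by
    calc 2 * K ≤ 2 * K * (N + 1) := Nat.le_mul_of_pos_right _ (by omega)
      _ ≤ s := hsB
  have hlin : 2 * (K * (r + 1)) = 2 * K * r + 2 * K := by ring
  have hKr : K * (r + 1) ≤ s := by omega
  have hr1 : 1 ≤ r := by omega
  have hKle : 2 * K * 1 ≤ 2 * K * r := Nat.mul_le_mul_left _ hr1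
  have h4 : 2 * K * r + 2 * K * r = 4 * K * r := by ring
  have hs4Kr : s ≤ 4 * K * r := by omega
  have hlogs : 0 < Real.log s := Real.log_pos (by exact_mod_cast hs2)
  have hlogr : 0 < Real.log r := Real.log_pos (by exact_mod_cast hr2)
  have hstep1 : a * Real.log r ≤ Real.log (g₁ r) := by
    have := hNdef r hrN
    rwa [le_div_iff₀ hlogr] at this
  have hstep2 : Real.log (g₁ r) ≤ Real.log C + Real.log (g₂ s) := by
    have h1 : (0:ℝ) < g₁ r := by
      have : (1:ℝ) ≤ g₁ r := by exact_mod_cast hg₁ r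
      linarith
    have hmono : g₂ (K * (r + 1)) ≤ g₂ s := hmono₂ hKr
    have h2 : (g₁ r : ℝ) ≤ (C : ℝ) * (g₂ s : ℝ) := by
      have := le_trans (hle r) (Nat.mul_le_mul_left C hmono)
      exact_mod_cast this
    calc Real.log (g₁ r) ≤ Real.log ((C : ℝ) * (g₂ s : ℝ)) := Real.log_le_log h1 h2
      _ = Real.log C + Real.log (g₂ s) := Real.log_mul (by positivity) (by
            have : (1:ℝ) ≤ g₂ s := by exact_mod_cast hg₂ s
            positivity)
  have hstep3 : Real.log (s : ℕ) ≤ Real.log (4 * K) + Real.log r := by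
    have hle' : (s : ℝ) ≤ (4 * K : ℝ) * r := by
      calc (s:ℝ) ≤ ((4 * K * r : ℕ) : ℝ) := by exact_mod_cast hs4Kr
        _ = (4 * K : ℝ) * r := by push_cast; ring
    calc Real.log s ≤ Real.log ((4 * K : ℝ) * r) := Real.log_le_log (by positivity) hle'
      _ = Real.log (4 * K) + Real.log r := Real.log_mul (by positivity) (by positivity)
  have key : a * Real.log s - (a * Real.log (4 * K) + Real.log C) ≤ Real.log (g₂ s) := by
    nlinarith
  rw [le_div_iff₀ hlogs]
  have hεs : a * Real.log (4 * K) + Real.log C < ε * Real.log s :=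
    (div_lt_iff₀ hlogs).mp hsε
  have hexp : (a - ε) * Real.log s = a * Real.log s - ε * Real.log s := by ring
  linarith

lemma ratio_nonneg (g : ℕ → ℕ) (hg : ∀ r, 1 ≤ g r) :
    ∀ᶠ r : ℕ in atTop, 0 ≤ Real.log (g r) / Real.log r := by
  filter_upwards [eventually_ge_atTop 2] with r hr
  have hlogr : 0 < Real.log r := Real.log_pos (by exact_mod_cast hr)
  exact div_nonneg (Real.log_nonneg (by exact_mod_cast hg r)) hlogr.le


lemma const_bound {L A r dd : ℝ} (hL : 1 ≤ L) (hA : 0 ≤ A) (hr : 0 ≤ r)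
    (h : dd ≤ L * (A + r)) : dd ≤ L * (1 + A) * (r + 1) := by
  have hL0 : (0:ℝ) ≤ L := by linarith
  nlinarith [mul_nonneg hL0 (mul_nonneg hA hr)]

/-- The growth function `β(x,r)`: the number of vertices at distance `≤ r`
from `x`. -/
noncomputable def growth {V : Type*} (G : SimpleGraph V) (x : V) (r : ℕ) : ℕ :=
  Nat.card {z : V | G.dist x z ≤ r}


lemma growth_eq_ncard {V : Type*} (G : SimpleGraph V) (x : V) (r : ℕ) :
    growth G x r = {z : V | G.dist x z ≤ r}.ncard := Nat.card_coe_set_eq _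

lemma growth_one {V : Type*} {G : SimpleGraph V} (hc : G.Connected)
    [∀ w : V, Fintype (G.neighborSet w)] {v : ℕ} (hdeg : ∀ z : V, G.degree z ≤ v)
    (x : V) (r : ℕ) : 1 ≤ growth G x r := by
  rw [growth_eq_ncard]
  have := (Set.ncard_pos ((ball_finite_and_card hc hdeg r x).1)).mpr
    ⟨x, by simp [SimpleGraph.dist_self]⟩
  omega

lemma growth_mono {V : Type*} {G : SimpleGraph V} (hc : G.Connected)
    [∀ w : V, Fintype (G.neighborSet w)] {v : ℕ} (hdeg : ∀ z : V, G.degree z ≤ v)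
    (x : V) : Monotone (fun r => growth G x r) := by
  intro r s hrs
  simp only [growth_eq_ncard]
  exact Set.ncard_le_ncard (fun z hz => le_trans hz hrs)
    (ball_finite_and_card hc hdeg s x).1

/-- Forward inequality: `growth G₁ x₁` is dominated by `growth G₂ x₂`. -/
lemma ineq_forward {V₁ V₂ : Type*} (G₁ : SimpleGraph V₁) (G₂ : SimpleGraph V₂)
    (hc₁ : G₁.Connected) (hc₂ : G₂.Connected)
    [∀ w : V₁, Fintype (G₁.neighborSet w)]
    [∀ w : V₂, Fintype (G₂.neighborSet w)]
    (v₁ v₂ : ℕ) (hdeg₁ : ∀ z : V₁, G₁.degree z ≤ v₁)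
    (hdeg₂ : ∀ z : V₂, G₂.degree z ≤ v₂)
    (F : V₁ → V₂) (lam eps : ℝ) (hlam : 1 ≤ lam) (heps : 0 ≤ eps)
    (hemb : ∀ x y : V₁,
      lam⁻¹ * (G₁.dist x y : ℝ) - eps ≤ (G₂.dist (F x) (F y) : ℝ) ∧
      (G₂.dist (F x) (F y) : ℝ) ≤ lam * (G₁.dist x y : ℝ) + eps)
    (x₁ : V₁) (x₂ : V₂) :
    ∃ K C : ℕ, 0 < K ∧ 0 < C ∧
      ∀ r, growth G₁ x₁ r ≤ C * growth G₂ x₂ (K * (r + 1)) := by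
  classical
  have hball₁ := ball_finite_and_card hc₁ hdeg₁
  have hball₂ := ball_finite_and_card hc₂ hdeg₂
  have hlam0 : (0:ℝ) < lam := by linarith
  set d₀ : ℕ := G₂.dist x₂ (F x₁) with hd₀
  set L : ℕ := ⌈lam⌉₊ with hLdef
  have hL1 : 1 ≤ L := Nat.one_le_ceil_iff.mpr (by linarith)
  have hlamL : lam ≤ (L:ℝ) := Nat.le_ceil lam
  have hL1R : (1:ℝ) ≤ (L:ℝ) := by exact_mod_cast hL1
  set E : ℕ := ⌈eps⌉₊ with hEdef
  have hepsE : eps ≤ (E:ℝ) := Nat.le_ceil eps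
  set M₁ : ℕ := ⌈lam * eps⌉₊ with hM₁def
  refine ⟨L * (1 + d₀ + E), (v₁ + 1) ^ M₁, Nat.mul_pos hL1 (by omega), pow_pos (by omega) _, ?_⟩
  intro r
  rw [growth_eq_ncard, growth_eq_ncard]
  apply ncard_le_mul_of_maps_to (hball₁ r x₁).1
    (hball₂ (L * (1 + d₀ + E) * (r + 1)) x₂).1 (f := F)
  · intro z hz
    simp only [Set.mem_setOf_eq] at hz ⊢
    have hcast : (G₁.dist x₁ z : ℝ) ≤ (r:ℝ) := by exact_mod_cast hz
    have h1 : (G₂.dist (F x₁) (F z) : ℝ) ≤ lam * r + eps := by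
      have h := (hemb x₁ z).2
      nlinarith
    have h2 : G₂.dist x₂ (F z) ≤ d₀ + G₂.dist (F x₁) (F z) := hc₂.dist_triangle
    have h3 : (G₂.dist x₂ (F z) : ℝ) ≤ ((L * (1 + d₀ + E) * (r + 1) : ℕ) : ℝ) := by
      have h2' : (G₂.dist x₂ (F z) : ℝ) ≤ (d₀:ℝ) + (lam * r + eps) := by
        have h2c : (G₂.dist x₂ (F z) : ℝ) ≤ (d₀:ℝ) + (G₂.dist (F x₁) (F z) : ℝ) := by
          exact_mod_cast h2
        linarith
      have hd0 : (0:ℝ) ≤ (d₀:ℝ) := Nat.cast_nonneg _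
      have hr0 : (0:ℝ) ≤ (r:ℝ) := Nat.cast_nonneg _
      have hE0 : (0:ℝ) ≤ (E:ℝ) := Nat.cast_nonneg _
      have hexp : ((L * (1 + d₀ + E) * (r + 1) : ℕ) : ℝ)
          = (L:ℝ) * (1 + d₀ + E) * ((r:ℝ) + 1) := by push_cast; ring
      rw [hexp]
      have hAle : (G₂.dist x₂ (F z) : ℝ) ≤ (L:ℝ) * (((d₀:ℝ) + E) + r) := by
        nlinarith [mul_nonneg (sub_nonneg.mpr hL1R) hd0,
          mul_nonneg (sub_nonneg.mpr hL1R) hE0,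
          mul_nonneg (sub_nonneg.mpr hlamL) hr0]
      have hcb := const_bound hL1R (by linarith : (0:ℝ) ≤ (d₀:ℝ) + E) hr0 hAle
      have hring : (L:ℝ) * (1 + ((d₀:ℝ) + E)) * ((r:ℝ) + 1)
          = (L:ℝ) * (1 + d₀ + E) * ((r:ℝ) + 1) := by ring
      linarith
    exact_mod_cast h3
  · intro y _
    rcases Set.eq_empty_or_nonempty
      {z | z ∈ {z : V₁ | G₁.dist x₁ z ≤ r} ∧ F z = y} with he | ⟨z₀, hz₀, hFz₀⟩
    · rw [he]; simp
    · have hsub : {z | z ∈ {z : V₁ | G₁.dist x₁ z ≤ r} ∧ F z = y} ⊆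
          {z : V₁ | G₁.dist z₀ z ≤ M₁} := by
        intro z ⟨_, hFz⟩
        have hFeq : F z₀ = F z := by rw [hFz₀, hFz]
        have hdist0 : (G₂.dist (F z₀) (F z) : ℝ) = 0 := by
          rw [hFeq]; exact_mod_cast SimpleGraph.dist_self
        have hlow := (hemb z₀ z).1
        rw [hdist0] at hlow
        have hd : (G₁.dist z₀ z : ℝ) ≤ lam * eps := by
          have h' : lam⁻¹ * (G₁.dist z₀ z : ℝ) ≤ eps := by linarith
          calc (G₁.dist z₀ z : ℝ) = lam * (lam⁻¹ * (G₁.dist z₀ z : ℝ)) := by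
                field_simp
            _ ≤ lam * eps := mul_le_mul_of_nonneg_left h' hlam0.le
        have : (G₁.dist z₀ z : ℝ) ≤ (M₁:ℝ) := le_trans hd (Nat.le_ceil _)
        exact_mod_cast this
      calc {z | z ∈ {z : V₁ | G₁.dist x₁ z ≤ r} ∧ F z = y}.ncard
          ≤ {z : V₁ | G₁.dist z₀ z ≤ M₁}.ncard :=
            Set.ncard_le_ncard hsub (hball₁ M₁ z₀).1
        _ ≤ (v₁ + 1) ^ M₁ := (hball₁ M₁ z₀).2

/-- Backward inequality: `growth G₂ x₂` is dominated by `growth G₁ x₁`. -/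
lemma ineq_backward {V₁ V₂ : Type*} (G₁ : SimpleGraph V₁) (G₂ : SimpleGraph V₂)
    (hc₁ : G₁.Connected) (hc₂ : G₂.Connected)
    [∀ w : V₁, Fintype (G₁.neighborSet w)]
    [∀ w : V₂, Fintype (G₂.neighborSet w)]
    (v₁ v₂ : ℕ) (hdeg₁ : ∀ z : V₁, G₁.degree z ≤ v₁)
    (hdeg₂ : ∀ z : V₂, G₂.degree z ≤ v₂)
    (F : V₁ → V₂) (lam eps eps' : ℝ) (hlam : 1 ≤ lam) (heps : 0 ≤ eps)
    (hemb : ∀ x y : V₁,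
      lam⁻¹ * (G₁.dist x y : ℝ) - eps ≤ (G₂.dist (F x) (F y) : ℝ) ∧
      (G₂.dist (F x) (F y) : ℝ) ≤ lam * (G₁.dist x y : ℝ) + eps)
    (hdense : ∀ z : V₂, ∃ x : V₁, (G₂.dist z (F x) : ℝ) ≤ eps')
    (x₁ : V₁) (x₂ : V₂) :
    ∃ K C : ℕ, 0 < K ∧ 0 < C ∧
      ∀ r, growth G₂ x₂ r ≤ C * growth G₁ x₁ (K * (r + 1)) := by
  classical
  have hball₁ := ball_finite_and_card hc₁ hdeg₁
  have hball₂ := ball_finite_and_card hc₂ hdeg₂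
  have hlam0 : (0:ℝ) < lam := by linarith
  set d₀ : ℕ := G₂.dist x₂ (F x₁) with hd₀
  set L : ℕ := ⌈lam⌉₊ with hLdef
  have hL1 : 1 ≤ L := Nat.one_le_ceil_iff.mpr (by linarith)
  have hlamL : lam ≤ (L:ℝ) := Nat.le_ceil lam
  have hL1R : (1:ℝ) ≤ (L:ℝ) := by exact_mod_cast hL1
  set E : ℕ := ⌈eps⌉₊ with hEdef
  have hepsE : eps ≤ (E:ℝ) := Nat.le_ceil eps
  set E' : ℕ := ⌈eps'⌉₊ with hE'def
  have heps'E' : eps' ≤ (E':ℝ) := Nat.le_ceil eps'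
  choose Φ hΦ using hdense
  refine ⟨L * (1 + d₀ + E' + E), (v₂ + 1) ^ E', Nat.mul_pos hL1 (by omega),
    pow_pos (by omega) _, ?_⟩
  intro r
  rw [growth_eq_ncard, growth_eq_ncard]
  apply ncard_le_mul_of_maps_to (hball₂ r x₂).1
    (hball₁ (L * (1 + d₀ + E' + E) * (r + 1)) x₁).1 (f := Φ)
  · intro z hz
    simp only [Set.mem_setOf_eq] at hz ⊢
    have hcast : (G₂.dist x₂ z : ℝ) ≤ (r:ℝ) := by exact_mod_cast hz
    have ht1 : G₂.dist (F x₁) (F (Φ z)) ≤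
        G₂.dist (F x₁) x₂ + G₂.dist x₂ (F (Φ z)) := hc₂.dist_triangle
    have ht2 : G₂.dist x₂ (F (Φ z)) ≤ G₂.dist x₂ z + G₂.dist z (F (Φ z)) := hc₂.dist_triangle
    have hcomm : G₂.dist (F x₁) x₂ = d₀ := by rw [hd₀, SimpleGraph.dist_comm]
    have hΦz := hΦ z
    have hreal : (G₂.dist (F x₁) (F (Φ z)) : ℝ) ≤ (d₀:ℝ) + (r:ℝ) + eps' := by
      have ht1c : (G₂.dist (F x₁) (F (Φ z)) : ℝ) ≤
          (d₀:ℝ) + (G₂.dist x₂ (F (Φ z)) : ℝ) := by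
        rw [← hcomm]; exact_mod_cast ht1
      have ht2c : (G₂.dist x₂ (F (Φ z)) : ℝ) ≤
          (G₂.dist x₂ z : ℝ) + (G₂.dist z (F (Φ z)) : ℝ) := by exact_mod_cast ht2
      linarith
    have hlow := (hemb x₁ (Φ z)).1
    have hd : (G₁.dist x₁ (Φ z) : ℝ) ≤ lam * ((d₀:ℝ) + (r:ℝ) + eps' + eps) := by
      have h' : lam⁻¹ * (G₁.dist x₁ (Φ z) : ℝ) ≤ (d₀:ℝ) + (r:ℝ) + eps' + eps := by
        linarith
      calc (G₁.dist x₁ (Φ z) : ℝ) = lam * (lam⁻¹ * (G₁.dist x₁ (Φ z) : ℝ)) := by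
            field_simp
        _ ≤ lam * ((d₀:ℝ) + (r:ℝ) + eps' + eps) :=
            mul_le_mul_of_nonneg_left h' hlam0.le
    have h3 : (G₁.dist x₁ (Φ z) : ℝ) ≤ ((L * (1 + d₀ + E' + E) * (r + 1) : ℕ) : ℝ) := by
      have hd0 : (0:ℝ) ≤ (d₀:ℝ) := Nat.cast_nonneg _
      have hr0 : (0:ℝ) ≤ (r:ℝ) := Nat.cast_nonneg _
      have hE0 : (0:ℝ) ≤ (E:ℝ) := Nat.cast_nonneg _
      have hE'0 : (0:ℝ) ≤ (E':ℝ) := Nat.cast_nonneg _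
      have hexp : ((L * (1 + d₀ + E' + E) * (r + 1) : ℕ) : ℝ)
          = (L:ℝ) * (1 + d₀ + E' + E) * ((r:ℝ) + 1) := by push_cast; ring
      rw [hexp]
      have e1 : lam * (d₀:ℝ) ≤ (L:ℝ) * d₀ := mul_le_mul_of_nonneg_right hlamL hd0
      have e2 : lam * (r:ℝ) ≤ (L:ℝ) * r := mul_le_mul_of_nonneg_right hlamL hr0
      have e3 : lam * eps' ≤ (L:ℝ) * E' :=
        le_trans (mul_le_mul_of_nonneg_left heps'E' hlam0.le)
          (mul_le_mul_of_nonneg_right hlamL hE'0)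
      have e4 : lam * eps ≤ (L:ℝ) * E :=
        le_trans (mul_le_mul_of_nonneg_left hepsE hlam0.le)
          (mul_le_mul_of_nonneg_right hlamL hE0)
      have hAle : (G₁.dist x₁ (Φ z) : ℝ) ≤ (L:ℝ) * (((d₀:ℝ) + E' + E) + r) := by
        nlinarith [e1, e2, e3, e4]
      have hcb := const_bound hL1R
        (by linarith : (0:ℝ) ≤ (d₀:ℝ) + E' + E) hr0 hAle
      have hring : (L:ℝ) * (1 + ((d₀:ℝ) + E' + E)) * ((r:ℝ) + 1)
          = (L:ℝ) * (1 + d₀ + E' + E) * ((r:ℝ) + 1) := by ring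
      linarith
    exact_mod_cast h3
  · intro y _
    have hsub : {z | z ∈ {z : V₂ | G₂.dist x₂ z ≤ r} ∧ Φ z = y} ⊆
        {z : V₂ | G₂.dist (F y) z ≤ E'} := by
      intro z ⟨_, hΦzy⟩
      have h1 : (G₂.dist z (F y) : ℝ) ≤ eps' := by
        have := hΦ z
        rwa [hΦzy] at this
      have h2 : (G₂.dist (F y) z : ℝ) ≤ (E':ℝ) := by
        rw [SimpleGraph.dist_comm]
        linarith
      exact_mod_cast h2
    calc {z | z ∈ {z : V₂ | G₂.dist x₂ z ≤ r} ∧ Φ z = y}.ncard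
        ≤ {z : V₂ | G₂.dist (F y) z ≤ E'}.ncard :=
          Set.ncard_le_ncard hsub (hball₂ E' (F y)).1
      _ ≤ (v₂ + 1) ^ E' := (hball₂ E' (F y)).2

/-- Quasi-isometric connected graphs of globally bounded vertex degree have
the same upper and lower internal scaling dimensions. -/
theorem stmt_16 {V₁ V₂ : Type*} (G₁ : SimpleGraph V₁) (G₂ : SimpleGraph V₂)
    (hc₁ : G₁.Connected) (hc₂ : G₂.Connected)
    [∀ w : V₁, Fintype (G₁.neighborSet w)]
    [∀ w : V₂, Fintype (G₂.neighborSet w)]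
    (v₁ v₂ : ℕ) (hdeg₁ : ∀ z : V₁, G₁.degree z ≤ v₁)
    (hdeg₂ : ∀ z : V₂, G₂.degree z ≤ v₂)
    (F : V₁ → V₂) (lam eps eps' : ℝ) (hlam : 1 ≤ lam) (heps : 0 ≤ eps)
    (hemb : ∀ x y : V₁,
      lam⁻¹ * (G₁.dist x y : ℝ) - eps ≤ (G₂.dist (F x) (F y) : ℝ) ∧
      (G₂.dist (F x) (F y) : ℝ) ≤ lam * (G₁.dist x y : ℝ) + eps)
    (hdense : ∀ z : V₂, ∃ x : V₁, (G₂.dist z (F x) : ℝ) ≤ eps')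
    (x₁ : V₁) (x₂ : V₂) :
    limsup (fun r : ℕ => Real.log (growth G₁ x₁ r) / Real.log r) atTop =
      limsup (fun r : ℕ => Real.log (growth G₂ x₂ r) / Real.log r) atTop ∧
    liminf (fun r : ℕ => Real.log (growth G₁ x₁ r) / Real.log r) atTop =
      liminf (fun r : ℕ => Real.log (growth G₂ x₂ r) / Real.log r) atTop := by
  obtain ⟨K₁, C₁, hK₁, hC₁, hIneqB⟩ := ineq_forward G₁ G₂ hc₁ hc₂ v₁ v₂ hdeg₁ hdeg₂
    F lam eps hlam heps hemb x₁ x₂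
  obtain ⟨K₂, C₂, hK₂, hC₂, hIneqA⟩ := ineq_backward G₁ G₂ hc₁ hc₂ v₁ v₂ hdeg₁ hdeg₂
    F lam eps eps' hlam heps hemb hdense x₁ x₂
  have hone₁ : ∀ r, 1 ≤ growth G₁ x₁ r := growth_one hc₁ hdeg₁ x₁
  have hone₂ : ∀ r, 1 ≤ growth G₂ x₂ r := growth_one hc₂ hdeg₂ x₂
  have hmono₁ : Monotone (fun r => growth G₁ x₁ r) := growth_mono hc₁ hdeg₁ x₁
  have hmono₂ : Monotone (fun r => growth G₂ x₂ r) := growth_mono hc₂ hdeg₂ x₂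
  constructor
  · apply limsup_eq_of_transfer _ _ (ratio_nonneg _ hone₁) (ratio_nonneg _ hone₂)
    · intro a ha ε hε
      exact transfer_upper (fun r => growth G₁ x₁ r) (fun r => growth G₂ x₂ r)
        hone₁ hone₂ K₂ C₂ hK₂ hC₂ hIneqA a ε hε ha
    · intro a ha ε hε
      exact transfer_upper (fun r => growth G₂ x₂ r) (fun r => growth G₁ x₁ r)
        hone₂ hone₁ K₁ C₁ hK₁ hC₁ hIneqB a ε hε ha
  · apply liminf_eq_of_transfer _ _ (ratio_nonneg _ hone₁) (ratio_nonneg _ hone₂)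
    · intro a ha ε hε
      exact transfer_lower (fun r => growth G₁ x₁ r) (fun r => growth G₂ x₂ r)
        hone₁ hone₂ hmono₂ K₁ C₁ hK₁ hC₁ hIneqB a ε hε ha
    · intro a ha ε hε
      exact transfer_lower (fun r => growth G₂ x₂ r) (fun r => growth G₁ x₁ r)
        hone₂ hone₁ hmono₁ K₂ C₂ hK₂ hC₂ hIneqA a ε hε ha
end
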